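/- Let (S_n) be a random walk under a probability measure Q with S_0 = 0, i.i.d. increments, E_Q(S_1) = 0 and 0 < E_Q(S_1²) < ∞. Fix β ≥ 0 and b > 0. Then E_Q[ Σ_{j=1}^{∞} e^{−b S_j} · 1{ S_i ≥ −β for all i ≤ j } ] is finite. -/

import Mathlib

/-! Since `E[X] = 0` and `X` is not a.s. `0`, the tangent-line inequality `e^y ≥ 1 + y`, strict off
`y = 0`, gives `E[e^{-bX}] > 1`, hence `q := E[e^{-bX}; X ≥ -K] > 1` for some `K`. With the cap
`c = -β - K`, the bounded function `V(x) = e^{-bc} - e^{-b (x ⊔ c)}` satisfies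
`E[V(x + X)] + (q - 1) e^{-bx} ≤ V(x)` for `x ≥ -β`. So `V(S_n)`, restricted to the event that the
walk has stayed above `-β`, decreases in expectation by at least `(q - 1) E[e^{-b S_n}; …]` at each
step, and summing over `n` bounds the whole series by `V(0) / (q - 1)`. -/

open MeasureTheory ProbabilityTheory Filter
open scoped ENNReal

/-- The random walk with increments `ξ`: `S n = ξ 0 + ⋯ + ξ (n-1)`, `S 0 = 0`. -/
noncomputable def walk {Ω : Type*} (ξ : ℕ → Ω → ℝ) (n : ℕ) (ω : Ω) : ℝ :=
  ∑ i ∈ Finset.range n, ξ i ω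

section Walk

variable {Ω : Type*} {ξ : ℕ → Ω → ℝ}

lemma walk_succ (n : ℕ) (ω : Ω) : walk ξ (n + 1) ω = walk ξ n ω + ξ n ω :=
  Finset.sum_range_succ _ n

def walkStaysIn (ξ : ℕ → Ω → ℝ) (D : Set ℝ) (n : ℕ) : Set Ω :=
  {ω | ∀ i ≤ n, walk ξ i ω ∈ D}

lemma walkStaysIn_succ_subset (D : Set ℝ) (n : ℕ) :
    walkStaysIn ξ D (n + 1) ⊆ walkStaysIn ξ D n :=
  fun _ hω i hi => hω i (hi.trans n.le_succ)

variable {m : MeasurableSpace Ω}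

lemma measurable_walk_of_lt {n : ℕ} (hξ : ∀ i < n, Measurable[m] (ξ i)) {k : ℕ} (hk : k ≤ n) :
    Measurable[m] (walk ξ k) :=
  Finset.measurable_sum _ fun i hi => hξ i ((Finset.mem_range.1 hi).trans_le hk)

lemma measurableSet_walkStaysIn_of_lt {n : ℕ} (hξ : ∀ i < n, Measurable[m] (ξ i)) {D : Set ℝ}
    (hD : MeasurableSet D) : MeasurableSet[m] (walkStaysIn ξ D n) := by
  have : walkStaysIn ξ D n = ⋂ i ∈ Set.Iic n, walk ξ i ⁻¹' D := by ext; simp [walkStaysIn]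
  rw [this]
  exact MeasurableSet.biInter (Set.to_countable _) fun i hi => measurable_walk_of_lt hξ hi hD

lemma measurable_walk [MeasurableSpace Ω] (hξ : ∀ i, Measurable (ξ i)) (n : ℕ) :
    Measurable (walk ξ n) :=
  measurable_walk_of_lt (fun i _ => hξ i) le_rfl

lemma measurableSet_walkStaysIn [MeasurableSpace Ω] (hξ : ∀ i, Measurable (ξ i)) {D : Set ℝ}
    (hD : MeasurableSet D) (n : ℕ) : MeasurableSet (walkStaysIn ξ D n) :=
  measurableSet_walkStaysIn_of_lt (fun i _ => hξ i) hD

lemma measurable_indicator_walkStaysIn [MeasurableSpace Ω] (hξ : ∀ i, Measurable (ξ i))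
    {D : Set ℝ} (hD : MeasurableSet D) {g : ℝ → ℝ≥0∞} (hg : Measurable g) (n : ℕ) :
    Measurable ((walkStaysIn ξ D n).indicator fun ω => g (walk ξ n ω)) :=
  (hg.comp (measurable_walk hξ n)).indicator (measurableSet_walkStaysIn hξ hD n)

end Walk

theorem ProbabilityTheory.IndepFun.lintegral_comp_eq_lintegral_lintegral {Ω α β : Type*}
    [MeasurableSpace Ω] [MeasurableSpace α] [MeasurableSpace β] {μ : Measure Ω}
    [IsFiniteMeasure μ] {X : Ω → α} {Y : Ω → β} (h : IndepFun X Y μ) (hX : Measurable X)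
    (hY : Measurable Y) {φ : α × β → ℝ≥0∞} (hφ : Measurable φ) :
    ∫⁻ ω, φ (X ω, Y ω) ∂μ = ∫⁻ ω, ∫⁻ ω', φ (X ω, Y ω') ∂μ ∂μ := by
  rw [← lintegral_map hφ (hX.prodMk hY), h.map_prod_eq_prod_map_map hX.aemeasurable
    hY.aemeasurable, lintegral_prod _ hφ.aemeasurable, lintegral_map hφ.lintegral_prod_right' hX]
  congr with x
  exact lintegral_map (hφ.comp measurable_prodMk_left) hY

theorem ProbabilityTheory.iIndepFun.indepFun_of_measurable_iSup {Ω ι β γ : Type*}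
    [MeasurableSpace Ω] [MeasurableSpace β] [MeasurableSpace γ] {μ : Measure Ω}
    {ξ : ι → Ω → β} (hindep : iIndepFun ξ μ) (hmeas : ∀ i, Measurable (ξ i)) {S : Set ι} {j : ι}
    (hj : j ∉ S) {Z : Ω → γ}
    (hZ : Measurable[⨆ i ∈ S, MeasurableSpace.comap (ξ i) inferInstance] Z) :
    IndepFun Z (ξ j) μ := by
  have h := indep_iSup_of_disjoint (fun i => (hmeas i).comap_le) hindep.iIndep
    (Set.disjoint_singleton_right.2 hj)
  rw [iSup_singleton] at h
  exact indep_of_indep_of_le_left h hZ.comap_le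

theorem ENNReal.tsum_le_of_add_le {u t : ℕ → ℝ≥0∞} (h : ∀ n, u (n + 1) + t n ≤ u n) :
    ∑' n, t n ≤ u 0 := by
  have hpartial : ∀ N, ∑ n ∈ Finset.range N, t n + u N ≤ u 0 := by
    intro N
    induction N with
    | zero => simp
    | succ N ih =>
      calc ∑ n ∈ Finset.range (N + 1), t n + u (N + 1)
          = ∑ n ∈ Finset.range N, t n + (u (N + 1) + t N) := by
            rw [Finset.sum_range_succ]; ring
        _ ≤ u 0 := (add_le_add le_rfl (h N)).trans ih
  exact ENNReal.tsum_le_of_sum_range_le fun N => le_self_add.trans (hpartial N)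

section RandomWalk

variable {Ω : Type*} [MeasurableSpace Ω] {μ : Measure Ω} [IsProbabilityMeasure μ]
  {ξ : ℕ → Ω → ℝ}

lemma lintegral_indicator_walk_succ (hmeas : ∀ i, Measurable (ξ i)) (hindep : iIndepFun ξ μ)
    (hident : ∀ i, IdentDistrib (ξ i) (ξ 0) μ μ) {D : Set ℝ} (hD : MeasurableSet D)
    {g : ℝ → ℝ≥0∞} (hg : Measurable g) (n : ℕ) :
    ∫⁻ ω, (walkStaysIn ξ D n).indicator (fun ω => g (walk ξ (n + 1) ω)) ω ∂μ
      = ∫⁻ ω, (walkStaysIn ξ D n).indicator (fun ω => ∫⁻ ω', g (walk ξ n ω + ξ 0 ω') ∂μ) ω ∂μ := by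
  set A := walkStaysIn ξ D n
  have hpast : ∀ i < n,
      Measurable[⨆ j ∈ Set.Iio n, MeasurableSpace.comap (ξ j) inferInstance] (ξ i) :=
    fun i hi => (comap_measurable (ξ i)).mono (le_iSup₂ (f := fun j (_ : j ∈ Set.Iio n) =>
      MeasurableSpace.comap (ξ j) inferInstance) i hi) le_rfl
  have hZ : IndepFun (fun ω => (walk ξ n ω, A.indicator (fun _ => (1 : ℝ≥0∞)) ω)) (ξ n) μ :=
    hindep.indepFun_of_measurable_iSup hmeas (S := Set.Iio n) (lt_irrefl n)
      ((measurable_walk_of_lt hpast le_rfl).prodMk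
        (measurable_const.indicator (measurableSet_walkStaysIn_of_lt hpast hD)))
  have hφ : Measurable fun p : (ℝ × ℝ≥0∞) × ℝ => p.1.2 * g (p.1.1 + p.2) := by fun_prop
  calc _ = ∫⁻ ω, A.indicator (fun _ => (1 : ℝ≥0∞)) ω * g (walk ξ n ω + ξ n ω) ∂μ := by
        congr with ω
        by_cases hω : ω ∈ A <;> simp [hω, walk_succ]
    _ = ∫⁻ ω, ∫⁻ ω', A.indicator (fun _ => (1 : ℝ≥0∞)) ω * g (walk ξ n ω + ξ n ω') ∂μ ∂μ :=
        hZ.lintegral_comp_eq_lintegral_lintegral (φ := fun p => p.1.2 * g (p.1.1 + p.2))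
          ((measurable_walk hmeas n).prodMk
            (measurable_const.indicator (measurableSet_walkStaysIn hmeas hD n))) (hmeas n) hφ
    _ = ∫⁻ ω, A.indicator (fun _ => (1 : ℝ≥0∞)) ω * ∫⁻ ω', g (walk ξ n ω + ξ 0 ω') ∂μ ∂μ := by
        congr with ω
        rw [lintegral_const_mul _ (by fun_prop)]
        exact congrArg _ ((hident n).comp (hg.comp (measurable_const_add _))).lintegral_eq
    _ = _ := by
        congr with ω
        by_cases hω : ω ∈ A <;> simp [hω]

theorem tsum_lintegral_indicator_walk_le_of_drift (hmeas : ∀ i, Measurable (ξ i))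
    (hindep : iIndepFun ξ μ) (hident : ∀ i, IdentDistrib (ξ i) (ξ 0) μ μ) {D : Set ℝ}
    (hD : MeasurableSet D) {V f : ℝ → ℝ≥0∞} (hV : Measurable V) (hf : Measurable f)
    (hdrift : ∀ x ∈ D, ∫⁻ ω, V (x + ξ 0 ω) ∂μ + f x ≤ V x) :
    ∑' n, ∫⁻ ω, (walkStaysIn ξ D n).indicator (fun ω => f (walk ξ n ω)) ω ∂μ ≤ V 0 := by
  refine (ENNReal.tsum_le_of_add_le (u := fun n =>
    ∫⁻ ω, (walkStaysIn ξ D n).indicator (fun ω => V (walk ξ n ω)) ω ∂μ) fun n => ?_).trans ?_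
  · calc ∫⁻ ω, (walkStaysIn ξ D (n + 1)).indicator (fun ω => V (walk ξ (n + 1) ω)) ω ∂μ
          + ∫⁻ ω, (walkStaysIn ξ D n).indicator (fun ω => f (walk ξ n ω)) ω ∂μ
        ≤ ∫⁻ ω, (walkStaysIn ξ D n).indicator (fun ω => V (walk ξ (n + 1) ω)) ω ∂μ
          + ∫⁻ ω, (walkStaysIn ξ D n).indicator (fun ω => f (walk ξ n ω)) ω ∂μ := by
          gcongr
          exact walkStaysIn_succ_subset D n
      _ = ∫⁻ ω, (walkStaysIn ξ D n).indicator
            (fun ω => ∫⁻ ω', V (walk ξ n ω + ξ 0 ω') ∂μ + f (walk ξ n ω)) ω ∂μ := by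
          rw [lintegral_indicator_walk_succ hmeas hindep hident hD hV n,
            ← lintegral_add_right _ (measurable_indicator_walkStaysIn hmeas hD hf n)]
          congr with ω
          by_cases hω : ω ∈ walkStaysIn ξ D n <;> simp [hω]
      _ ≤ ∫⁻ ω, (walkStaysIn ξ D n).indicator (fun ω => V (walk ξ n ω)) ω ∂μ := by
          refine lintegral_mono fun ω => ?_
          by_cases hω : ω ∈ walkStaysIn ξ D n
          · simpa [hω] using hdrift _ (hω n le_rfl)
          · simp [hω]
  · calc ∫⁻ ω, (walkStaysIn ξ D 0).indicator (fun ω => V (walk ξ 0 ω)) ω ∂μ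
        ≤ ∫⁻ _, V 0 ∂μ := lintegral_mono fun ω =>
          Set.indicator_le_self _ _ ω |>.trans_eq (by simp [walk])
      _ = V 0 := by simp

end RandomWalk

section ExponentialMoment

open Real

variable {Ω : Type*} [MeasurableSpace Ω] {μ : Measure Ω} [IsProbabilityMeasure μ]
  {X : Ω → ℝ}

theorem one_lt_lintegral_exp_mul (hX : Measurable X) (hint : Integrable X μ)
    (hmean : ∫ ω, X ω ∂μ = 0) (hne : ¬ X =ᵐ[μ] 0) {t : ℝ} (ht : t ≠ 0) :
    1 < ∫⁻ ω, ENNReal.ofReal (exp (t * X ω)) ∂μ := by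
  have hexp_nonneg : 0 ≤ᵐ[μ] fun ω => exp (t * X ω) := ae_of_all _ fun _ => (exp_pos _).le
  by_cases hexp : Integrable (fun ω => exp (t * X ω)) μ
  swap
  · have htop : ∫⁻ ω, ENNReal.ofReal (exp (t * X ω)) ∂μ = ⊤ := by
      by_contra h
      exact hexp ((lintegral_ofReal_ne_top_iff_integrable (by fun_prop) hexp_nonneg).1 h)
    rw [htop]
    exact ENNReal.one_lt_top
  rw [← ofReal_integral_eq_lintegral_ofReal hexp hexp_nonneg, ENNReal.one_lt_ofReal]
  set gain : Ω → ℝ := fun ω => exp (t * X ω) - (1 + t * X ω)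
  have hlin : Integrable (fun ω => 1 + t * X ω) μ := (integrable_const 1).add (hint.const_mul t)
  have hgain_pos : 0 < ∫ ω, gain ω ∂μ := by
    have hgain_int : Integrable gain μ := hexp.sub hlin
    refine (integral_pos_iff_support_of_nonneg (fun ω => ?_) hgain_int).2 ?_
    · simp only [gain, Pi.zero_apply]
      linarith [add_one_le_exp (t * X ω)]
    · refine (pos_iff_ne_zero.2 fun h => hne (ae_iff.2 (measure_mono_null (fun ω hω => ?_) h)))
      have := add_one_lt_exp (mul_ne_zero ht hω)
      simp only [Function.mem_support, gain]
      linarith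
  have hsplit : ∫ ω, exp (t * X ω) ∂μ = 1 + ∫ ω, gain ω ∂μ := by
    rw [integral_sub hexp hlin, integral_add (integrable_const 1) (hint.const_mul t),
      integral_const_mul, hmean]
    simp
  linarith

theorem exists_one_lt_setLIntegral_exp_mul (hX : Measurable X) (hint : Integrable X μ)
    (hmean : ∫ ω, X ω ∂μ = 0) (hne : ¬ X =ᵐ[μ] 0) {t : ℝ} (ht : t ≠ 0) :
    ∃ K : ℕ, 1 < ∫⁻ ω in {ω | -(K : ℝ) ≤ X ω}, ENNReal.ofReal (exp (t * X ω)) ∂μ := by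
  have hmono : Monotone fun K : ℕ => {ω | -(K : ℝ) ≤ X ω} :=
    fun K L hKL ω (hω : -(K : ℝ) ≤ X ω) => show -(L : ℝ) ≤ X ω by
      linarith [(Nat.cast_le (α := ℝ)).2 hKL]
  have hunion : ⋃ K : ℕ, {ω | -(K : ℝ) ≤ X ω} = Set.univ := by
    refine Set.eq_univ_of_forall fun ω => Set.mem_iUnion.2 ?_
    obtain ⟨K, hK⟩ := exists_nat_ge (-X ω)
    exact ⟨K, show -(K : ℝ) ≤ X ω by linarith⟩
  have hlim := tendsto_measure_iUnion_atTop
    (μ := μ.withDensity fun ω => ENNReal.ofReal (exp (t * X ω))) hmono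
  rw [hunion, withDensity_apply _ MeasurableSet.univ, Measure.restrict_univ] at hlim
  obtain ⟨K, hK⟩ :=
    (hlim.eventually (lt_mem_nhds (one_lt_lintegral_exp_mul hX hint hmean hne ht))).exists
  refine ⟨K, ?_⟩
  rwa [Function.comp_apply, withDensity_apply _ (measurableSet_le measurable_const hX)] at hK

end ExponentialMoment

section ExpLyapunov

open Real

/-- The exponential `e^{-b x}`, capped at level `c` so that it stays bounded, and turned upside
down so that it decreases in expectation along the walk. -/
noncomputable def expLyapunov (b c x : ℝ) : ℝ≥0∞ :=
  ENNReal.ofReal (exp (-b * c)) - ENNReal.ofReal (exp (-b * max x c))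

lemma measurable_expLyapunov (b c : ℝ) : Measurable (expLyapunov b c) := by
  unfold expLyapunov
  fun_prop

variable {Ω : Type*} [MeasurableSpace Ω] {μ : Measure Ω} [IsProbabilityMeasure μ]
  {X : Ω → ℝ}

theorem lintegral_expLyapunov_add_le (hX : Measurable X) {b c K x : ℝ} (hb : 0 ≤ b)
    (hK : 0 ≤ K) (hx : c + K ≤ x)
    (hq : 1 ≤ ∫⁻ ω in {ω | -K ≤ X ω}, ENNReal.ofReal (exp (-b * X ω)) ∂μ) :
    ∫⁻ ω, expLyapunov b c (x + X ω) ∂μ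
        + ((∫⁻ ω in {ω | -K ≤ X ω}, ENNReal.ofReal (exp (-b * X ω)) ∂μ) - 1)
          * ENNReal.ofReal (exp (-b * x))
      ≤ expLyapunov b c x := by
  set q := ∫⁻ ω in {ω | -K ≤ X ω}, ENNReal.ofReal (exp (-b * X ω)) ∂μ
  set C := ENNReal.ofReal (exp (-b * c))
  set W := ENNReal.ofReal (exp (-b * x))
  set ψ : ℝ → ℝ≥0∞ := fun y => ENNReal.ofReal (exp (-b * max y c))
  have hψC : ∀ y, ψ y ≤ C := fun y =>
    ENNReal.ofReal_le_ofReal (exp_le_exp.2 (by nlinarith [le_max_right y c]))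
  set P := ∫⁻ ω, ψ (x + X ω) ∂μ
  have hPC : P ≤ C := (lintegral_mono fun ω => hψC _).trans (by simp)
  have hVint : ∫⁻ ω, expLyapunov b c (x + X ω) ∂μ = C - P := by
    rw [show (fun ω => expLyapunov b c (x + X ω)) = fun ω => C - ψ (x + X ω) from rfl,
      lintegral_sub (by fun_prop) (hPC.trans_lt ENNReal.ofReal_lt_top).ne
        (ae_of_all _ fun ω => hψC _), lintegral_const, measure_univ, mul_one]
  -- Where the increment is at least `-K`, the walk stays above the cap `c`.
  have hqW : q * W ≤ P :=
    calc q * W = ∫⁻ ω in {ω | -K ≤ X ω}, ENNReal.ofReal (exp (-b * X ω)) * W ∂μ :=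
          (lintegral_mul_const _ (by fun_prop)).symm
      _ = ∫⁻ ω in {ω | -K ≤ X ω}, ψ (x + X ω) ∂μ := by
          refine setLIntegral_congr_fun (measurableSet_le measurable_const hX) fun ω hω => ?_
          have hω : -K ≤ X ω := hω
          simp only [ψ, W, max_eq_left (by linarith : c ≤ x + X ω),
            ← ENNReal.ofReal_mul (exp_pos _).le, ← exp_add]
          ring_nf
      _ ≤ P := setLIntegral_le_lintegral _ _
  have hVx : expLyapunov b c x = C - W := by
    simp only [expLyapunov, max_eq_left (by linarith : c ≤ x), C, W]
  rw [hVint, hVx]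
  refine ENNReal.le_sub_of_add_le_right ENNReal.ofReal_ne_top ?_
  calc C - P + (q - 1) * W + W = C - P + q * W := by
        rw [add_assoc, ← add_one_mul, tsub_add_cancel_of_le hq]
    _ ≤ C - P + P := by gcongr
    _ = C := tsub_add_cancel_of_le hPC

end ExpLyapunov

theorem exp_weighted_occupation_finite_general {Ω : Type*} [MeasurableSpace Ω]
    (μ : Measure Ω) [IsProbabilityMeasure μ] (ξ : ℕ → Ω → ℝ)
    (hmeas : ∀ i, Measurable (ξ i))
    (hindep : iIndepFun ξ μ)
    (hident : ∀ i, IdentDistrib (ξ i) (ξ 0) μ μ)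
    (hmean : ∫ ω, ξ 0 ω ∂μ = 0)
    (hsq_int : Integrable (fun ω => (ξ 0 ω) ^ 2) μ)
    (hsq_pos : 0 < ∫ ω, (ξ 0 ω) ^ 2 ∂μ)
    (β b : ℝ) (hb : 0 < b) :
    (∫⁻ ω, ∑' j : ℕ,
        Set.indicator {ω' | ∀ i ≤ j + 1, -β ≤ walk ξ i ω'}
          (fun ω' => ENNReal.ofReal (Real.exp (-b * walk ξ (j + 1) ω'))) ω ∂μ)
      < ⊤ := by
  have hint : Integrable (ξ 0) μ :=
    (memLp_two_iff_integrable_sq (hmeas 0).aestronglyMeasurable |>.2 hsq_int).integrable one_le_two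
  have hne : ¬ ξ 0 =ᵐ[μ] 0 := fun h =>
    hsq_pos.ne' (integral_eq_zero_of_ae (h.mono fun ω hω => by simp [hω]))
  obtain ⟨K, hq⟩ :=
    exists_one_lt_setLIntegral_exp_mul (hmeas 0) hint hmean hne (neg_ne_zero.2 hb.ne')
  set q := ∫⁻ ω in {ω | -(K : ℝ) ≤ ξ 0 ω}, ENNReal.ofReal (Real.exp (-b * ξ 0 ω)) ∂μ
  set W : ℝ → ℝ≥0∞ := fun x => ENNReal.ofReal (Real.exp (-b * x))
  have hW : Measurable W := by fun_prop
  have hbound := tsum_lintegral_indicator_walk_le_of_drift hmeas hindep hident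
    measurableSet_Ici (measurable_expLyapunov b (-β - K)) (f := fun x => (q - 1) * W x)
    (by fun_prop) fun x (hx : -β ≤ x) => lintegral_expLyapunov_add_le (hmeas 0) hb.le
      K.cast_nonneg (by linarith) hq.le
  set g : ℕ → ℝ≥0∞ := fun n =>
    ∫⁻ ω, (walkStaysIn ξ (Set.Ici (-β)) n).indicator (fun ω => W (walk ξ n ω)) ω ∂μ
  have hscale : (q - 1) * ∑' n, g n ≤ expLyapunov b (-β - K) 0 := by
    rw [← ENNReal.tsum_mul_left]
    refine le_of_eq_of_le (tsum_congr fun n => ?_) hbound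
    simp_rw [Set.indicator_const_mul,
      lintegral_const_mul _ (measurable_indicator_walkStaysIn hmeas measurableSet_Ici hW n)]
    rfl
  have hg : ∑' n, g n < ⊤ := ENNReal.lt_top_of_mul_ne_top_right
    (hscale.trans_lt (tsub_le_self.trans_lt ENNReal.ofReal_lt_top)).ne (tsub_pos_of_lt hq).ne'
  refine lt_of_eq_of_lt (lintegral_tsum fun j => ?_) ?_
  · exact (measurable_indicator_walkStaysIn hmeas measurableSet_Ici hW (j + 1)).aemeasurable
  · exact (ENNReal.tsum_comp_le_tsum_of_injective (add_left_injective 1) g).trans_lt hg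

/-- For a centered random walk with finite positive variance, `β ≥ 0` and `b > 0`,
`E[ Σ_{j≥1} e^{-b S_j} 1{S_i ≥ -β, ∀ i ≤ j} ] < ∞` (Lemma B.2 of Aïdékon). -/
theorem exp_weighted_occupation_finite {Ω : Type*} [MeasurableSpace Ω]
    (μ : Measure Ω) [IsProbabilityMeasure μ] (ξ : ℕ → Ω → ℝ)
    (hmeas : ∀ i, Measurable (ξ i))
    (hindep : iIndepFun ξ μ)
    (hident : ∀ i, IdentDistrib (ξ i) (ξ 0) μ μ)
    (hmean : ∫ ω, ξ 0 ω ∂μ = 0)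
    (hsq_int : Integrable (fun ω => (ξ 0 ω) ^ 2) μ)
    (hsq_pos : 0 < ∫ ω, (ξ 0 ω) ^ 2 ∂μ)
    (β b : ℝ) (hβ : 0 ≤ β) (hb : 0 < b) :
    (∫⁻ ω, ∑' j : ℕ,
        Set.indicator {ω' | ∀ i ≤ j + 1, -β ≤ walk ξ i ω'}
          (fun ω' => ENNReal.ofReal (Real.exp (-b * walk ξ (j + 1) ω'))) ω ∂μ)
      < ⊤ :=
  exp_weighted_occupation_finite_general μ ξ hmeas hindep hident hmean hsq_int hsq_pos β b hb
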